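/- arXiv:2412.21002 — 6 statements merged into one kernel-verified Lean document; each statement's English description precedes it below -/
import Mathlib

section
/- Let D_tx and D_rx be nonempty finite sets of natural numbers, and let S be a subset of D_tx such that S + D_rx = D_tx + D_rx. Then the minimum element of D_tx and the maximum element of D_tx both belong to S. -/
/-! The least element of `D_tx + D_rx` is `min D_tx + min D_rx`, and in a strictly monotone
addition this sum has no other representation `a + b` with `a ∈ D_tx`, `b ∈ D_rx`. Since it also
lies in `S + D_rx`, its `D_tx`-summand `min D_tx` must come from `S`. The maximum is symmetric. -/

open Finset Pointwise

namespace Finset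

variable {α : Type*} [LinearOrder α] [Add α] [AddLeftStrictMono α] [AddRightStrictMono α]
  {A B S : Finset α}

theorem min'_mem_of_subset_of_add_eq (hSA : S ⊆ A) (hsum : S + B = A + B) (hA : A.Nonempty)
    (hB : B.Nonempty) : A.min' hA ∈ S := by
  obtain ⟨s, hs, b, hb, hsb⟩ :=
    mem_add.1 (hsum ▸ add_mem_add (min'_mem A hA) (min'_mem B hB))
  obtain ⟨hmin, -⟩ :=
    (add_eq_add_iff_eq_and_eq (min'_le A s (hSA hs)) (min'_le B b hb)).1 hsb.symm
  exact hmin ▸ hs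

theorem max'_mem_of_subset_of_add_eq (hSA : S ⊆ A) (hsum : S + B = A + B) (hA : A.Nonempty)
    (hB : B.Nonempty) : A.max' hA ∈ S := by
  obtain ⟨s, hs, b, hb, hsb⟩ :=
    mem_add.1 (hsum ▸ add_mem_add (max'_mem A hA) (max'_mem B hB))
  obtain ⟨hmax, -⟩ :=
    (add_eq_add_iff_eq_and_eq (le_max' A s (hSA hs)) (le_max' B b hb)).1 hsb
  exact hmax ▸ hs

end Finset

theorem stmt_0 (Dtx Drx : Finset ℕ) (htx : Dtx.Nonempty) (hrx : Drx.Nonempty)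
    (S : Finset ℕ) (hS : S ⊆ Dtx) (hsum : S + Drx = Dtx + Drx) :
    Dtx.min' htx ∈ S ∧ Dtx.max' htx ∈ S :=
  ⟨min'_mem_of_subset_of_add_eq hS hsum htx hrx, max'_mem_of_subset_of_add_eq hS hsum htx hrx⟩
end

section
/- Let D_tx and D_rx be nonempty finite sets of natural numbers with |D_tx| = N_tx, and let Q be an integer with 2 ≤ Q ≤ N_tx. Then the number of subsets S of D_tx with |S| = Q and S + D_rx = D_tx + D_rx is at most the binomial coefficient C(N_tx − 2, Q − 2). -/
open Finset Pointwise

lemma min'_addF (A B : Finset ℕ) (hA : A.Nonempty) (hB : B.Nonempty) :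
    (A + B).min' (hA.add hB) = A.min' hA + B.min' hB := by
  apply le_antisymm
  · exact Finset.min'_le _ _ (Finset.add_mem_add (A.min'_mem hA) (B.min'_mem hB))
  · apply Finset.le_min'
    intro y hy
    rw [Finset.mem_add] at hy
    obtain ⟨a, ha, b, hb, rfl⟩ := hy
    exact add_le_add (Finset.min'_le _ _ ha) (Finset.min'_le _ _ hb)

lemma max'_addF (A B : Finset ℕ) (hA : A.Nonempty) (hB : B.Nonempty) :
    (A + B).max' (hA.add hB) = A.max' hA + B.max' hB := by
  apply le_antisymm
  · apply Finset.max'_le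
    intro y hy
    rw [Finset.mem_add] at hy
    obtain ⟨a, ha, b, hb, rfl⟩ := hy
    exact add_le_add (Finset.le_max' _ _ ha) (Finset.le_max' _ _ hb)
  · exact Finset.le_max' _ _ (Finset.add_mem_add (A.max'_mem hA) (B.max'_mem hB))

theorem stmt_1 (Dtx Drx : Finset ℕ) (htx : Dtx.Nonempty) (hrx : Drx.Nonempty)
    (Ntx Q : ℕ) (hcard : Dtx.card = Ntx) (hQ2 : 2 ≤ Q) (hQN : Q ≤ Ntx) :
    ((Dtx.powersetCard Q).filter (fun S => S + Drx = Dtx + Drx)).card ≤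
      (Ntx - 2).choose (Q - 2) := by
  set m := Dtx.min' htx with hm
  set M := Dtx.max' htx with hM
  have hcard2 : 1 < Dtx.card := by omega
  have hmM : m < M := Finset.min'_lt_max'_of_card _ hcard2
  have hmem : ∀ S ∈ (Dtx.powersetCard Q).filter (fun S => S + Drx = Dtx + Drx),
      m ∈ S ∧ M ∈ S ∧ S ⊆ Dtx ∧ S.card = Q := by
    intro S hS
    rw [Finset.mem_filter, Finset.mem_powersetCard] at hS
    obtain ⟨⟨hsub, hScard⟩, hsum⟩ := hS
    have hSne : S.Nonempty := by
      rw [← Finset.card_pos, hScard]; omega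
    have h1 : S.min' hSne + Drx.min' hrx = m + Drx.min' hrx := by
      rw [← min'_addF S Drx hSne hrx, ← min'_addF Dtx Drx htx hrx]
      congr 1
    have h2 : S.max' hSne + Drx.max' hrx = M + Drx.max' hrx := by
      rw [← max'_addF S Drx hSne hrx, ← max'_addF Dtx Drx htx hrx]
      congr 1
    have hm' : S.min' hSne = m := by omega
    have hM' : S.max' hSne = M := by omega
    exact ⟨hm' ▸ S.min'_mem hSne, hM' ▸ S.max'_mem hSne, hsub, hScard⟩
  have hMem : M ∈ Dtx.erase m := Finset.mem_erase.mpr ⟨hmM.ne', Dtx.max'_mem htx⟩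
  have hkey := Finset.card_le_card_of_injOn (fun S => (S.erase m).erase M)
    (s := (Dtx.powersetCard Q).filter (fun S => S + Drx = Dtx + Drx))
    (t := ((Dtx.erase m).erase M).powersetCard (Q - 2))
    (by
      intro S hS
      obtain ⟨hmS, hMS, hsub, hScard⟩ := hmem S hS
      simp only [Finset.mem_coe]
      rw [Finset.mem_powersetCard]
      constructor
      · intro x hx
        rw [Finset.mem_erase] at hx ⊢
        refine ⟨hx.1, ?_⟩
        rw [Finset.mem_erase] at hx ⊢
        exact ⟨hx.2.1, hsub hx.2.2⟩
      · rw [Finset.card_erase_of_mem (Finset.mem_erase.mpr ⟨hmM.ne', hMS⟩),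
          Finset.card_erase_of_mem hmS, hScard]
        omega
    )
    (by
      intro S1 h1 S2 h2 heq
      obtain ⟨hm1, hM1, -, -⟩ := hmem S1 h1
      obtain ⟨hm2, hM2, -, -⟩ := hmem S2 h2
      have e1 : S1 = insert m (insert M ((S1.erase m).erase M)) := by
        rw [Finset.insert_erase (Finset.mem_erase.mpr ⟨hmM.ne', hM1⟩),
          Finset.insert_erase hm1]
      have e2 : S2 = insert m (insert M ((S2.erase m).erase M)) := by
        rw [Finset.insert_erase (Finset.mem_erase.mpr ⟨hmM.ne', hM2⟩),
          Finset.insert_erase hm2]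
      rw [e1, e2]
      simp only at heq
      rw [heq]
    )
  refine hkey.trans ?_
  rw [Finset.card_powersetCard]
  apply le_of_eq
  congr 1
  rw [Finset.card_erase_of_mem hMem, Finset.card_erase_of_mem (Dtx.min'_mem htx), hcard]
  omega
end

section
/- Let N_tx, N_rx, Q be natural numbers with N_rx ≥ 1, 2 ≤ Q ≤ N_tx, and N_tx ≤ N_rx + 1. Take the ULA transmit array D_tx = U_{N_tx} = {0, 1, ..., N_tx − 1} and ULA receive array D_rx = U_{N_rx} = {0, 1, ..., N_rx − 1}. Then the number of subsets S of D_tx with |S| = Q and S + D_rx = U_{N_tx + N_rx − 1} equals exactly the binomial coefficient C(N_tx − 2, Q − 2). -/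
open Finset Pointwise

lemma key_iff (Ntx Nrx : ℕ) (hrx : 1 ≤ Nrx) (h2 : 2 ≤ Ntx) (hle : Ntx ≤ Nrx + 1)
    {S : Finset ℕ} (hS : S ⊆ Finset.range Ntx) :
    S + Finset.range Nrx = Finset.range (Ntx + Nrx - 1) ↔ 0 ∈ S ∧ Ntx - 1 ∈ S := by
  constructor
  · intro h
    constructor
    · have h0 : (0 : ℕ) ∈ S + Finset.range Nrx := by
        rw [h]; simp; omega
      rw [Finset.mem_add] at h0
      obtain ⟨a, ha, b, hb, hab⟩ := h0
      have : a = 0 := by omega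
      rwa [← this]
    · have h0 : (Ntx + Nrx - 2 : ℕ) ∈ S + Finset.range Nrx := by
        rw [h]; simp; omega
      rw [Finset.mem_add] at h0
      obtain ⟨a, ha, b, hb, hab⟩ := h0
      have ha' : a < Ntx := Finset.mem_range.mp (hS ha)
      have hb' : b < Nrx := Finset.mem_range.mp hb
      have : a = Ntx - 1 := by omega
      rwa [← this]
  · rintro ⟨h0, h1⟩
    ext k
    rw [Finset.mem_add, Finset.mem_range]
    constructor
    · rintro ⟨a, ha, b, hb, hab⟩
      have ha' : a < Ntx := Finset.mem_range.mp (hS ha)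
      have hb' : b < Nrx := Finset.mem_range.mp hb
      omega
    · intro hk
      by_cases hc : k < Nrx
      · exact ⟨0, h0, k, Finset.mem_range.mpr hc, by omega⟩
      · exact ⟨Ntx - 1, h1, k - (Ntx - 1), Finset.mem_range.mpr (by omega), by omega⟩

theorem stmt_2 (Ntx Nrx Q : ℕ) (hrx : 1 ≤ Nrx) (hQ2 : 2 ≤ Q) (hQN : Q ≤ Ntx)
    (hle : Ntx ≤ Nrx + 1) :
    (((Finset.range Ntx).powersetCard Q).filter
        (fun S => S + Finset.range Nrx = Finset.range (Ntx + Nrx - 1))).card =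
      (Ntx - 2).choose (Q - 2) := by
  have h2 : 2 ≤ Ntx := le_trans hQ2 hQN
  have h01 : (0 : ℕ) ≠ Ntx - 1 := by omega
  have hfil : (((Finset.range Ntx).powersetCard Q).filter
        (fun S => S + Finset.range Nrx = Finset.range (Ntx + Nrx - 1))) =
      ((Finset.range Ntx).powersetCard Q).filter (fun S => 0 ∈ S ∧ Ntx - 1 ∈ S) := by
    apply Finset.filter_congr
    intro S hs
    rw [Finset.mem_powersetCard] at hs
    exact key_iff Ntx Nrx hrx h2 hle hs.1
  rw [hfil]
  have hmem1 : Ntx - 1 ∈ (Finset.range Ntx).erase 0 := by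
    exact Finset.mem_erase.mpr ⟨by omega, Finset.mem_range.mpr (by omega)⟩
  have hcard : (Ntx - 2).choose (Q - 2) =
      ((((Finset.range Ntx).erase 0).erase (Ntx - 1)).powersetCard (Q - 2)).card := by
    rw [Finset.card_powersetCard, Finset.card_erase_of_mem hmem1,
      Finset.card_erase_of_mem (by simp only [Finset.mem_range]; omega), Finset.card_range]
    rfl
  rw [hcard]
  refine Finset.card_bij' (fun S _ => (S.erase 0).erase (Ntx - 1))
    (fun T _ => insert 0 (insert (Ntx - 1) T)) ?_ ?_ ?_ ?_
  · intro S hS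
    rw [Finset.mem_filter, Finset.mem_powersetCard] at hS
    obtain ⟨⟨hsub, hc⟩, h0, h1⟩ := hS
    rw [Finset.mem_powersetCard]
    constructor
    · exact Finset.erase_subset_erase _ (Finset.erase_subset_erase _ hsub)
    · rw [Finset.card_erase_of_mem (Finset.mem_erase.mpr ⟨h01.symm, h1⟩),
        Finset.card_erase_of_mem h0, hc]
      omega
  · intro T hT
    rw [Finset.mem_powersetCard] at hT
    obtain ⟨hsub, hc⟩ := hT
    have h1T : Ntx - 1 ∉ T := fun h => (Finset.mem_erase.mp (hsub h)).1 rfl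
    have h0T : (0 : ℕ) ∉ T := fun h => (Finset.mem_erase.mp (Finset.mem_of_mem_erase (hsub h))).1 rfl
    rw [Finset.mem_filter, Finset.mem_powersetCard]
    refine ⟨⟨?_, ?_⟩, ?_, ?_⟩
    · apply Finset.insert_subset (by simp; omega)
      apply Finset.insert_subset (by simp; omega)
      intro x hx
      exact Finset.mem_of_mem_erase (Finset.mem_of_mem_erase (hsub hx))
    · rw [Finset.card_insert_of_notMem (by simp [h01, h0T]),
        Finset.card_insert_of_notMem h1T, hc]
      omega
    · exact Finset.mem_insert_self _ _
    · exact Finset.mem_insert_of_mem (Finset.mem_insert_self _ _)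
  · intro S hS
    rw [Finset.mem_filter, Finset.mem_powersetCard] at hS
    obtain ⟨⟨hsub, hc⟩, h0, h1⟩ := hS
    show insert 0 (insert (Ntx - 1) ((S.erase 0).erase (Ntx - 1))) = S
    rw [Finset.insert_erase (Finset.mem_erase.mpr ⟨h01.symm, h1⟩), Finset.insert_erase h0]
  · intro T hT
    rw [Finset.mem_powersetCard] at hT
    obtain ⟨hsub, hc⟩ := hT
    have h1T : Ntx - 1 ∉ T := fun h => (Finset.mem_erase.mp (hsub h)).1 rfl
    have h0T : (0 : ℕ) ∉ T := fun h => (Finset.mem_erase.mp (Finset.mem_of_mem_erase (hsub h))).1 rfl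
    show ((insert 0 (insert (Ntx - 1) T)).erase 0).erase (Ntx - 1) = T
    rw [Finset.erase_insert (by simp [h01, h0T]), Finset.erase_insert h1T]
end

section
/- Let N_tx, N_rx be natural numbers with N_rx ≥ 1, N_tx ≥ 2, and N_tx ≤ N_rx + 1, and let S be a nonempty subset of the ULA U_{N_tx} = {0, 1, ..., N_tx − 1}. Then S + U_{N_rx} = U_{N_tx + N_rx − 1} if and only if both 0 ∈ S and N_tx − 1 ∈ S. -/
/-! The sumset automatically lies in `range (Ntx + Nrx - 1)`. Its extreme elements `0` and
`Ntx + Nrx - 2` can only be written as `0 + 0` and `(Ntx - 1) + (Nrx - 1)`, which forces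
`0, Ntx - 1 ∈ S`. Conversely the translates of `range Nrx` by `0` and `Ntx - 1` already cover
`range (Ntx + Nrx - 1)`, since they overlap or abut as soon as `Ntx ≤ Nrx + 1`. -/

open Finset Pointwise

namespace Finset

theorem add_range_subset_range {S : Finset ℕ} {n : ℕ} (hS : S ⊆ range n) (m : ℕ) :
    S + range m ⊆ range (n + m - 1) := by
  intro x hx
  obtain ⟨a, ha, b, hb, rfl⟩ := mem_add.1 hx
  have ha' := mem_range.1 (hS ha)
  rw [mem_range] at hb ⊢
  omega

theorem range_subset_add_range {S : Finset ℕ} {n m : ℕ} (h0 : 0 ∈ S) (hlast : n - 1 ∈ S)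
    (hnm : n ≤ m + 1) : range (n + m - 1) ⊆ S + range m := by
  intro x hx
  rw [mem_range] at hx
  rcases lt_or_ge x m with hxm | hxm
  · exact mem_add.2 ⟨0, h0, x, mem_range.2 hxm, zero_add x⟩
  · exact mem_add.2 ⟨n - 1, hlast, x - (n - 1), mem_range.2 (by omega), by omega⟩

theorem zero_mem_of_zero_mem_add {S T : Finset ℕ} (h : 0 ∈ S + T) : 0 ∈ S := by
  obtain ⟨a, ha, b, -, hab⟩ := mem_add.1 h
  rwa [Nat.eq_zero_of_add_eq_zero_right hab] at ha

theorem sub_one_mem_of_add_sub_two_mem_add {S T : Finset ℕ} {n m : ℕ} (hS : S ⊆ range n)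
    (hT : T ⊆ range m) (h : n + m - 2 ∈ S + T) : n - 1 ∈ S := by
  obtain ⟨a, ha, b, hb, hab⟩ := mem_add.1 h
  have ha' := mem_range.1 (hS ha)
  have hb' := mem_range.1 (hT hb)
  rwa [show a = n - 1 by omega] at ha

end Finset

theorem stmt_3_general (Ntx Nrx : ℕ) (htx : 2 ≤ Ntx) (hle : Ntx ≤ Nrx + 1)
    (S : Finset ℕ) (hS : S ⊆ Finset.range Ntx) :
    S + Finset.range Nrx = Finset.range (Ntx + Nrx - 1) ↔ 0 ∈ S ∧ Ntx - 1 ∈ S := by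
  constructor
  · intro h
    have hmem : ∀ x < Ntx + Nrx - 1, x ∈ S + range Nrx := fun x hx => h ▸ mem_range.2 hx
    exact ⟨zero_mem_of_zero_mem_add (hmem 0 (by omega)),
      sub_one_mem_of_add_sub_two_mem_add hS subset_rfl (hmem _ (by omega))⟩
  · rintro ⟨h0, hlast⟩
    exact (add_range_subset_range hS Nrx).antisymm (range_subset_add_range h0 hlast hle)

theorem stmt_3 (Ntx Nrx : ℕ) (hrx : 1 ≤ Nrx) (htx : 2 ≤ Ntx) (hle : Ntx ≤ Nrx + 1)
    (S : Finset ℕ) (hSne : S.Nonempty) (hS : S ⊆ Finset.range Ntx) :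
    S + Finset.range Nrx = Finset.range (Ntx + Nrx - 1) ↔ 0 ∈ S ∧ Ntx - 1 ∈ S :=
  stmt_3_general Ntx Nrx htx hle S hS
end

section
/- Let L and n be natural numbers with L ≥ 1 and n ≥ 1, and let S be a finite set of natural numbers satisfying n·U_L ⊆ S ⊆ U_{n·(L−1)+1}, where n·U_L = {n·k : k = 0, 1, ..., L − 1}. Then S + U_n = U_{L·n}. -/
open Finset Pointwise

/-! Every `x < L * n` is `n * (x / n) + x % n`, which gives `n·U_L + U_n = U_{Ln}`; and the
largest element of `S + U_n` is at most `n (L - 1) + (n - 1) = L n - 1`. Sumsets are monotone,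
so `S + U_n` is squeezed between the two. -/

theorem range_succ_add_range_subset (a b : ℕ) : range (a + 1) + range b ⊆ range (a + b) := by
  intro x hx
  obtain ⟨s, hs, r, hr, rfl⟩ := mem_add.mp hx
  simp only [mem_range] at hs hr ⊢
  omega

theorem image_mul_range_add_range (L n : ℕ) :
    (range L).image (n * ·) + range n = range (L * n) := by
  refine subset_antisymm ?_ fun x hx => ?_
  · intro x hx
    obtain ⟨_, hnk, r, hr, rfl⟩ := mem_add.mp hx
    obtain ⟨k, hk, rfl⟩ := mem_image.mp hnk
    simp only [mem_range] at hk hr ⊢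
    nlinarith
  · have hxn : x < n * L := by rw [mul_comm]; exact mem_range.mp hx
    have hn : 0 < n := Nat.pos_of_ne_zero (by rintro rfl; simp at hxn)
    exact mem_add.mpr ⟨n * (x / n), mem_image_of_mem _ (mem_range.mpr (Nat.div_lt_of_lt_mul hxn)),
      x % n, mem_range.mpr (Nat.mod_lt x hn), Nat.div_add_mod x n⟩

theorem stmt_10_general (L n : ℕ) (hL : 1 ≤ L) (S : Finset ℕ)
    (hsub : (Finset.range L).image (fun k => n * k) ⊆ S)
    (hsup : S ⊆ Finset.range (n * (L - 1) + 1)) :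
    S + Finset.range n = Finset.range (L * n) := by
  have hLn : n * (L - 1) + n = L * n := by
    obtain ⟨m, rfl⟩ := Nat.exists_eq_add_of_le' hL
    simp [mul_add, mul_comm]
  refine subset_antisymm ?_ ?_
  · calc S + range n ⊆ range (n * (L - 1) + 1) + range n := add_subset_add_right hsup
      _ ⊆ range (L * n) := hLn ▸ range_succ_add_range_subset _ _
  · calc range (L * n) = (range L).image (n * ·) + range n := (image_mul_range_add_range L n).symm
      _ ⊆ S + range n := add_subset_add_right hsub

theorem stmt_10 (L n : ℕ) (hL : 1 ≤ L) (hn : 1 ≤ n) (S : Finset ℕ)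
    (hsub : (Finset.range L).image (fun k => n * k) ⊆ S)
    (hsup : S ⊆ Finset.range (n * (L - 1) + 1)) :
    S + Finset.range n = Finset.range (L * n) :=
  stmt_10_general L n hL S hsub hsup
end

section
/- Let N_tx, N_rx, Q, N_Σ, L be natural numbers with N_rx ≥ 1, N_Σ = L · N_rx, L ≤ Q ≤ N_tx, and N_tx + N_rx − 1 ≤ N_Σ. Then there exist finite sets D_tx and D_rx of natural numbers with |D_tx| = N_tx, |D_rx| = N_rx, and D_tx + D_rx = U_{N_Σ}, such that the number of subsets S of D_tx with |S| = Q and S + D_rx = U_{N_Σ} is at least the binomial coefficient C(N_tx − L, Q − L). -/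
/-!
Place the transmitters of a "nested" array at the multiples `0, Nrx, …, (L - 1) Nrx`: together
with the receive ULA `{0, …, Nrx - 1}` they already fill `{0, …, L Nrx - 1}`. Any further
transmitter positions below `Nsum + 1 - Nrx` keep the sum co-array inside that range, so every
`Q`-subset of the transmit array containing the `L` multiples is identifiable, and there are
`C(Ntx - L, Q - L)` of these.
-/

open Finset Pointwise

namespace Finset

theorem image_mul_range_add_range (L n : ℕ) :
    (range L).image (· * n) + range n = range (L * n) := by
  ext m
  simp only [mem_add, mem_image, mem_range]
  constructor
  · rintro ⟨_, ⟨k, hk, rfl⟩, c, hc, rfl⟩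
    have : (k + 1) * n ≤ L * n := Nat.mul_le_mul_right _ hk
    rw [Nat.add_one_mul] at this
    omega
  · intro hm
    have hn : 0 < n := Nat.pos_of_ne_zero (by rintro rfl; simp at hm)
    exact ⟨m / n * n, ⟨m / n, (Nat.div_lt_iff_lt_mul hn).2 hm, rfl⟩, m % n, Nat.mod_lt _ hn,
      Nat.div_add_mod' m n⟩

theorem add_range_subset_range_iff {S : Finset ℕ} {n m : ℕ} (hn : 0 < n) :
    S + range n ⊆ range m ↔ S ⊆ range (m + 1 - n) := by
  constructor
  · intro h s hs
    have := mem_range.1 (h (add_mem_add hs (mem_range.2 (Nat.sub_lt hn one_pos))))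
    rw [mem_range]
    omega
  · rintro hS _ hx
    obtain ⟨s, hs, c, hc, rfl⟩ := mem_add.1 hx
    have := mem_range.1 (hS hs)
    rw [mem_range] at hc ⊢
    omega

theorem add_range_eq_range_of_subset {A S : Finset ℕ} {n m : ℕ} (hn : 0 < n)
    (hA : A + range n = range m) (hAS : A ⊆ S) (hS : S ⊆ range (m + 1 - n)) :
    S + range n = range m :=
  ((add_range_subset_range_iff hn).2 hS).antisymm (hA ▸ add_subset_add_right hAS)

theorem choose_card_sdiff_le_card_filter_superset {α : Type*} [DecidableEq α] {A D : Finset α} {Q : ℕ}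
    (hAD : A ⊆ D) (hAQ : #A ≤ Q) :
    (#(D \ A)).choose (Q - #A) ≤ #{S ∈ D.powersetCard Q | A ⊆ S} := by
  rw [← card_powersetCard]
  refine card_le_card_of_injOn (A ∪ ·) (fun T hT => ?_) (fun T₁ hT₁ T₂ hT₂ h => ?_)
  · obtain ⟨hTD, hTcard⟩ := mem_powersetCard.1 hT
    have hdisj : Disjoint A T := disjoint_sdiff.mono_right hTD
    simp only [coe_filter, Set.mem_ofPred_eq, mem_powersetCard]
    refine ⟨⟨union_subset hAD (hTD.trans sdiff_subset), ?_⟩, subset_union_left⟩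
    rw [card_union_of_disjoint hdisj, hTcard]
    omega
  · rw [mem_coe, mem_powersetCard] at hT₁ hT₂
    rw [← union_sdiff_cancel_left (disjoint_sdiff.mono_right hT₁.1),
      ← union_sdiff_cancel_left (disjoint_sdiff.mono_right hT₂.1)]
    exact congrArg (· \ A) h

end Finset

theorem stmt_11 (Ntx Nrx Q Nsum L : ℕ) (hrx : 1 ≤ Nrx) (hNsum : Nsum = L * Nrx)
    (hLQ : L ≤ Q) (hQN : Q ≤ Ntx) (hlb : Ntx + Nrx - 1 ≤ Nsum) :
    ∃ Dtx Drx : Finset ℕ, Dtx.card = Ntx ∧ Drx.card = Nrx ∧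
      Dtx + Drx = Finset.range Nsum ∧
      (Ntx - L).choose (Q - L) ≤
        ((Dtx.powersetCard Q).filter (fun S => S + Drx = Finset.range Nsum)).card := by
  set A := (range L).image (· * Nrx)
  set R := Nsum + 1 - Nrx
  have hA : A + range Nrx = range Nsum := hNsum ▸ image_mul_range_add_range L Nrx
  have hAcard : #A = L := by
    rw [card_image_of_injective _ (mul_left_injective₀ (by omega)), card_range]
  have hAR : A ⊆ range R := (add_range_subset_range_iff hrx).1 hA.subset
  have hroom : Ntx - L ≤ #(range R \ A) := by
    rw [card_sdiff_of_subset hAR, card_range, hAcard]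
    omega
  obtain ⟨B, hBR, hBcard⟩ := exists_subset_card_eq hroom
  have hAB : Disjoint A B := disjoint_sdiff.mono_right hBR
  have hDR : A ∪ B ⊆ range R := union_subset hAR (hBR.trans sdiff_subset)
  refine ⟨A ∪ B, range Nrx, by rw [card_union_of_disjoint hAB]; omega, card_range Nrx,
    add_range_eq_range_of_subset hrx hA subset_union_left hDR, ?_⟩
  calc (Ntx - L).choose (Q - L) = (#((A ∪ B) \ A)).choose (Q - #A) := by
        rw [union_sdiff_cancel_left hAB, hBcard, hAcard]
    _ ≤ #{S ∈ (A ∪ B).powersetCard Q | A ⊆ S} :=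
        choose_card_sdiff_le_card_filter_superset subset_union_left (by omega)
    _ ≤ _ := card_le_card <| monotone_filter_right _ fun S hS hAS =>
        add_range_eq_range_of_subset hrx hA hAS ((mem_powersetCard.1 hS).1.trans hDR)
end
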